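/- With notation as in the context, suppose χ ∈ Σ_{1 ≤ s ≤ r−1} B ⊗ Λ^s W ⊗ Λ^{r−s} W is a mixed element of homogeneous length r ≥ 3 satisfying α(χ) + β(χ) = γ(χ) + δ(χ). Then χ can be written as χ = Σ_I b_I (S_I − w_I − w'_I), where the sum is over strictly increasing index sequences I of length r, b_I ∈ B, S_I = ∏_j (w_{i_j} + w'_{i_j}), w_I = ∏_j w_{i_j} (first factor), and w'_I = ∏_j w'_{i_j} (second factor). -/
import Mathlib


/-!
Common setup: `B` a commutative ℚ-algebra (playing the role of the coefficient
(graded-)commutative algebra), `ι` an ordered index set for a basis `{w_i}` of an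
oddly-graded vector space `W`.  Since `W` is concentrated in odd degrees, the free
graded-commutative algebras `B ⊗ ΛW ⊗ ΛW` and `B ⊗ ΛW ⊗ ΛW ⊗ ΛW` are the exterior
algebras over `B` on the free modules with bases indexed by `ι ⊕ ι` and `ι ⊕ ι ⊕ ι`.
-/

noncomputable section

variable (B : Type) [CommRing B] [Algebra ℚ B] (ι : Type) [LinearOrder ι]

/-- `B ⊗ ΛW ⊗ ΛW` -/
abbrev TwoFold := ExteriorAlgebra B ((ι ⊕ ι) →₀ B)

/-- `B ⊗ ΛW ⊗ ΛW ⊗ ΛW` -/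
abbrev ThreeFold := ExteriorAlgebra B ((ι ⊕ ι ⊕ ι) →₀ B)

variable {B ι}

/-- `w_i`, the generator of the first `ΛW` factor of `B ⊗ ΛW ⊗ ΛW`. -/
def w (i : ι) : TwoFold B ι := ExteriorAlgebra.ι B (Finsupp.single (Sum.inl i) 1)

/-- `w'_i`, the generator of the second `ΛW` factor of `B ⊗ ΛW ⊗ ΛW`. -/
def w' (i : ι) : TwoFold B ι := ExteriorAlgebra.ι B (Finsupp.single (Sum.inr i) 1)

/-- `w_i` in `B ⊗ ΛW ⊗ ΛW ⊗ ΛW`. -/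
def u (i : ι) : ThreeFold B ι := ExteriorAlgebra.ι B (Finsupp.single (Sum.inl i) 1)

/-- `w'_i` in `B ⊗ ΛW ⊗ ΛW ⊗ ΛW`. -/
def u' (i : ι) : ThreeFold B ι := ExteriorAlgebra.ι B (Finsupp.single (Sum.inr (Sum.inl i)) 1)

/-- `w''_i` in `B ⊗ ΛW ⊗ ΛW ⊗ ΛW`. -/
def u'' (i : ι) : ThreeFold B ι := ExteriorAlgebra.ι B (Finsupp.single (Sum.inr (Sum.inr i)) 1)

/-- The `B`-algebra map `B ⊗ ΛW ⊗ ΛW → B ⊗ ΛW ⊗ ΛW ⊗ ΛW` determined by a choice of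
(module-valued) images for the generators `w_i`, `w'_i`. -/
def genMap (g : ι ⊕ ι → (ι ⊕ ι ⊕ ι) →₀ B) : TwoFold B ι →ₐ[B] ThreeFold B ι :=
  ExteriorAlgebra.lift B
    ⟨(ExteriorAlgebra.ι B).comp ((Finsupp.lift ((ι ⊕ ι ⊕ ι) →₀ B) B (ι ⊕ ι)) g),
     fun m => by simp [ExteriorAlgebra.ι_sq_zero]⟩

/-- `α : w ↦ w, w' ↦ w'`. -/
def mapα : TwoFold B ι →ₐ[B] ThreeFold B ι :=
  genMap (Sum.elim (fun i => Finsupp.single (Sum.inl i) 1)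
    (fun i => Finsupp.single (Sum.inr (Sum.inl i)) 1))

/-- `β : w ↦ w + w', w' ↦ w''`. -/
def mapβ : TwoFold B ι →ₐ[B] ThreeFold B ι :=
  genMap (Sum.elim
    (fun i => Finsupp.single (Sum.inl i) 1 + Finsupp.single (Sum.inr (Sum.inl i)) 1)
    (fun i => Finsupp.single (Sum.inr (Sum.inr i)) 1))

/-- `γ : w ↦ w, w' ↦ w' + w''`. -/
def mapγ : TwoFold B ι →ₐ[B] ThreeFold B ι :=
  genMap (Sum.elim (fun i => Finsupp.single (Sum.inl i) 1)
    (fun i => Finsupp.single (Sum.inr (Sum.inl i)) 1 + Finsupp.single (Sum.inr (Sum.inr i)) 1))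

/-- `δ : w ↦ w', w' ↦ w''`. -/
def mapδ : TwoFold B ι →ₐ[B] ThreeFold B ι :=
  genMap (Sum.elim (fun i => Finsupp.single (Sum.inr (Sum.inl i)) 1)
    (fun i => Finsupp.single (Sum.inr (Sum.inr i)) 1))

/-- The monomial `w^ε_I = w_{i_1}^{ε_1} ⋯ w_{i_r}^{ε_r}`, where `w^0 = w` (first factor)
and `w^1 = w'` (second factor). -/
def mono {r : ℕ} (I : Fin r → ι) (ε : Fin r → Bool) : TwoFold B ι :=
  (List.ofFn fun j => if ε j then w' (I j) else w (I j)).prod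

/-- `S_I = (w_{i_1} + w'_{i_1}) ⋯ (w_{i_r} + w'_{i_r})`. -/
def SI {r : ℕ} (I : Fin r → ι) : TwoFold B ι :=
  (List.ofFn fun j => w (I j) + w' (I j)).prod

section Aux
set_option linter.unusedSectionVars false

/-- image of `w i` under the generic substitution: `single (inl i) 1`. -/
def eL (i : ι) : (ι ⊕ ι) →₀ B := Finsupp.single (Sum.inl i) 1

/-- image of `w' i` under the generic substitution: `single (inr i) 1`. -/
def eR (i : ι) : (ι ⊕ ι) →₀ B := Finsupp.single (Sum.inr i) 1

/-- Endomorphisms of `TwoFold` given by generator substitution. -/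
def pMap (g : ι ⊕ ι → (ι ⊕ ι) →₀ B) : TwoFold B ι →ₐ[B] TwoFold B ι :=
  ExteriorAlgebra.lift B
    ⟨(ExteriorAlgebra.ι B).comp ((Finsupp.lift ((ι ⊕ ι) →₀ B) B (ι ⊕ ι)) g),
     fun m => by simp [ExteriorAlgebra.ι_sq_zero]⟩

/-- Maps `ThreeFold → TwoFold` given by generator substitution. -/
def qMap (g : ι ⊕ ι ⊕ ι → (ι ⊕ ι) →₀ B) : ThreeFold B ι →ₐ[B] TwoFold B ι :=
  ExteriorAlgebra.lift B
    ⟨(ExteriorAlgebra.ι B).comp ((Finsupp.lift ((ι ⊕ ι) →₀ B) B (ι ⊕ ι ⊕ ι)) g),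
     fun m => by simp [ExteriorAlgebra.ι_sq_zero]⟩

/-- Substitution endomorphism of `TwoFold` with `w i ↦ ι (a i)`, `w' i ↦ ι (b i)`. -/
def P (a b : ι → (ι ⊕ ι) →₀ B) : TwoFold B ι →ₐ[B] TwoFold B ι := pMap (Sum.elim a b)

/-- Substitution map `ThreeFold → TwoFold` with `u ↦ ι x`, `u' ↦ ι y`, `u'' ↦ ι z`. -/
def Q (x y z : ι → (ι ⊕ ι) →₀ B) : ThreeFold B ι →ₐ[B] TwoFold B ι :=
  qMap (Sum.elim x (Sum.elim y z))

@[simp] lemma pMap_ι (g : ι ⊕ ι → (ι ⊕ ι) →₀ B) (m : (ι ⊕ ι) →₀ B) :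
    pMap g (ExteriorAlgebra.ι B m) =
      ExteriorAlgebra.ι B ((Finsupp.lift ((ι ⊕ ι) →₀ B) B (ι ⊕ ι)) g m) := by
  simp [pMap]

@[simp] lemma qMap_ι (g : ι ⊕ ι ⊕ ι → (ι ⊕ ι) →₀ B) (m : (ι ⊕ ι ⊕ ι) →₀ B) :
    qMap g (ExteriorAlgebra.ι B m) =
      ExteriorAlgebra.ι B ((Finsupp.lift ((ι ⊕ ι) →₀ B) B (ι ⊕ ι ⊕ ι)) g m) := by
  simp [qMap]

@[simp] lemma genMap_ι (g : ι ⊕ ι → (ι ⊕ ι ⊕ ι) →₀ B) (m : (ι ⊕ ι) →₀ B) :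
    genMap g (ExteriorAlgebra.ι B m) =
      ExteriorAlgebra.ι B ((Finsupp.lift ((ι ⊕ ι ⊕ ι) →₀ B) B (ι ⊕ ι)) g m) := by
  simp [genMap]

@[simp] lemma lift_single (κ : Type) (g : κ → (ι ⊕ ι) →₀ B) (k : κ) :
    (Finsupp.lift ((ι ⊕ ι) →₀ B) B κ) g (Finsupp.single k 1) = g k := by
  rw [Finsupp.lift_apply, Finsupp.sum_single_index] <;> simp

@[simp] lemma lift_single₃ (κ : Type) (g : κ → (ι ⊕ ι ⊕ ι) →₀ B) (k : κ) :
    (Finsupp.lift ((ι ⊕ ι ⊕ ι) →₀ B) B κ) g (Finsupp.single k 1) = g k := by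
  rw [Finsupp.lift_apply, Finsupp.sum_single_index] <;> simp

@[simp] lemma P_w (a b : ι → (ι ⊕ ι) →₀ B) (i : ι) :
    P a b (w i) = ExteriorAlgebra.ι B (a i) := by
  simp [P, w]

@[simp] lemma P_w' (a b : ι → (ι ⊕ ι) →₀ B) (i : ι) :
    P a b (w' i) = ExteriorAlgebra.ι B (b i) := by
  simp [P, w']

@[simp] lemma Q_u (x y z : ι → (ι ⊕ ι) →₀ B) (i : ι) :
    Q x y z (u i) = ExteriorAlgebra.ι B (x i) := by simp [Q, u]

@[simp] lemma Q_u' (x y z : ι → (ι ⊕ ι) →₀ B) (i : ι) :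
    Q x y z (u' i) = ExteriorAlgebra.ι B (y i) := by simp [Q, u']

@[simp] lemma Q_u'' (x y z : ι → (ι ⊕ ι) →₀ B) (i : ι) :
    Q x y z (u'' i) = ExteriorAlgebra.ι B (z i) := by simp [Q, u'']

@[simp] lemma mapα_w (i : ι) : (mapα (w i) : ThreeFold B ι) = u i := by simp [mapα, w, u]
@[simp] lemma mapα_w' (i : ι) : (mapα (w' i) : ThreeFold B ι) = u' i := by simp [mapα, w', u']
@[simp] lemma mapβ_w (i : ι) : (mapβ (w i) : ThreeFold B ι) = u i + u' i := by
  simp [mapβ, w, u, u', map_add]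
@[simp] lemma mapβ_w' (i : ι) : (mapβ (w' i) : ThreeFold B ι) = u'' i := by simp [mapβ, w', u'']
@[simp] lemma mapγ_w (i : ι) : (mapγ (w i) : ThreeFold B ι) = u i := by simp [mapγ, w, u]
@[simp] lemma mapγ_w' (i : ι) : (mapγ (w' i) : ThreeFold B ι) = u' i + u'' i := by
  simp [mapγ, w', u', u'', map_add]
@[simp] lemma mapδ_w (i : ι) : (mapδ (w i) : ThreeFold B ι) = u' i := by simp [mapδ, w, u']
@[simp] lemma mapδ_w' (i : ι) : (mapδ (w' i) : ThreeFold B ι) = u'' i := by simp [mapδ, w', u'']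

/-- Extensionality for algebra maps out of `TwoFold`: enough to agree on the `w i` and `w' i`. -/
lemma twoHom_ext {X : Type} [Semiring X] [Algebra B X] {f g : TwoFold B ι →ₐ[B] X}
    (h1 : ∀ i, f (w i) = g (w i)) (h2 : ∀ i, f (w' i) = g (w' i)) : f = g := by
  apply ExteriorAlgebra.hom_ext
  apply Finsupp.lhom_ext
  intro a c
  have hsingle : (Finsupp.single a c : (ι ⊕ ι) →₀ B) = c • Finsupp.single a 1 := by
    rw [Finsupp.smul_single, smul_eq_mul, mul_one]
  have key : f (ExteriorAlgebra.ι B (Finsupp.single a 1)) =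
      g (ExteriorAlgebra.ι B (Finsupp.single a 1)) := by
    cases a with
    | inl i => exact h1 i
    | inr i => exact h2 i
  simp only [LinearMap.comp_apply, AlgHom.toLinearMap_apply, hsingle, map_smul, key]

/-- `2w`-type substitution data. -/
def eLL (i : ι) : (ι ⊕ ι) →₀ B := eL i + eL i
def eRR (i : ι) : (ι ⊕ ι) →₀ B := eR i + eR i
def eS (i : ι) : (ι ⊕ ι) →₀ B := eL i + eR i
def eK (i : ι) : (ι ⊕ ι) →₀ B := eL i + (eR i + eR i)

lemma Q_comp_α (x y z : ι → (ι ⊕ ι) →₀ B) : (Q x y z).comp mapα = P x y := by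
  apply twoHom_ext <;> intro i <;> simp [AlgHom.comp_apply]

lemma Q_comp_β (x y z : ι → (ι ⊕ ι) →₀ B) :
    (Q x y z).comp mapβ = P (fun i => x i + y i) z := by
  apply twoHom_ext <;> intro i <;> simp [AlgHom.comp_apply, map_add]

lemma Q_comp_γ (x y z : ι → (ι ⊕ ι) →₀ B) :
    (Q x y z).comp mapγ = P x (fun i => y i + z i) := by
  apply twoHom_ext <;> intro i <;> simp [AlgHom.comp_apply, map_add]

lemma Q_comp_δ (x y z : ι → (ι ⊕ ι) →₀ B) : (Q x y z).comp mapδ = P y z := by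
  apply twoHom_ext <;> intro i <;> simp [AlgHom.comp_apply]

/-- The master relation: applying an arbitrary substitution `Q x y z` to the hypothesis. -/
lemma rel {χ : TwoFold B ι} (h : mapα χ + mapβ χ = mapγ χ + mapδ χ)
    (x y z xy yz : ι → (ι ⊕ ι) →₀ B)
    (hxy : ∀ i, x i + y i = xy i) (hyz : ∀ i, y i + z i = yz i) :
    P x y χ + P xy z χ = P x yz χ + P y z χ := by
  have hxy' : (fun i => x i + y i) = xy := funext hxy
  have hyz' : (fun i => y i + z i) = yz := funext hyz
  have h2 := congrArg (Q x y z) h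
  rw [map_add, map_add, ← AlgHom.comp_apply, ← AlgHom.comp_apply, ← AlgHom.comp_apply,
    ← AlgHom.comp_apply, Q_comp_α, Q_comp_β, Q_comp_γ, Q_comp_δ, hxy', hyz'] at h2
  exact h2

lemma P_eL_eR : (P eL eR : TwoFold B ι →ₐ[B] TwoFold B ι) = AlgHom.id B _ := by
  apply twoHom_ext <;> intro i <;> simp [P, eL, eR, w, w']

lemma comp_T2_S : (P eL eRR).comp (P eR eL) = (P eRR eL : TwoFold B ι →ₐ[B] _) := by
  apply twoHom_ext <;> intro i <;> simp [P, AlgHom.comp_apply, w, w', eL, eR, eRR, map_add, map_add]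

lemma comp_T2'_S : (P eLL eR).comp (P eR eL) = (P eR eLL : TwoFold B ι →ₐ[B] _) := by
  apply twoHom_ext <;> intro i <;> simp [P, AlgHom.comp_apply, w, w', eL, eR, eLL, map_add, map_add]

lemma comp_T2_Γ : (P eL eRR).comp (P eL eS) = (P eL eK : TwoFold B ι →ₐ[B] _) := by
  apply twoHom_ext <;> intro i <;> simp [P, AlgHom.comp_apply, w, w', eL, eR, eRR, eS, eK, map_add, map_add]

lemma comp_T2_T2' : (P eL eRR).comp (P eLL eR) = (P eLL eRR : TwoFold B ι →ₐ[B] _) := by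
  apply twoHom_ext <;> intro i <;> simp [P, AlgHom.comp_apply, w, w', eL, eR, eRR, eLL, map_add, map_add]

lemma comp_T2_A : (P eL eRR).comp (P eL eL) = (P eL eL : TwoFold B ι →ₐ[B] _) := by
  apply twoHom_ext <;> intro i <;> simp [P, AlgHom.comp_apply, w, w', eL, eR, eRR, map_add, map_add]

lemma comp_D_S : ((P eLL eRR).comp (P eR eL) : TwoFold B ι →ₐ[B] _) =
    (P eR eL).comp (P eLL eRR) := by
  apply twoHom_ext <;> intro i <;> simp [P, AlgHom.comp_apply, w, w', eL, eR, eRR, eLL, map_add, map_add]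

lemma map_mono {r : ℕ} (f : TwoFold B ι →ₐ[B] TwoFold B ι) (I : Fin r → ι) (ε : Fin r → Bool) :
    f (mono I ε) = (List.ofFn fun j => f (if ε j then w' (I j) else w (I j))).prod := by
  rw [mono, map_list_prod, List.map_ofFn]; rfl

lemma A_mono {r : ℕ} (I : Fin r → ι) (ε : Fin r → Bool) :
    P eL eL (mono I ε) = (mono I (fun _ => false) : TwoFold B ι) := by
  rw [map_mono]
  have e : ∀ j, P eL eL ((if ε j then w' (I j) else w (I j) : TwoFold B ι)) = w (I j) := by
    intro j; cases hj : ε j <;> simp [hj, P, eL, w, w']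
  simp only [e]
  simp [mono]

lemma B_mono {r : ℕ} (I : Fin r → ι) (ε : Fin r → Bool) :
    P eR eR (mono I ε) = (mono I (fun _ => true) : TwoFold B ι) := by
  rw [map_mono]
  have e : ∀ j, P eR eR ((if ε j then w' (I j) else w (I j) : TwoFold B ι)) = w' (I j) := by
    intro j; cases hj : ε j <;> simp [hj, P, eR, w, w']
  simp only [e]
  simp [mono]

lemma C_mono {r : ℕ} (I : Fin r → ι) (ε : Fin r → Bool) :
    P eS eS (mono I ε) = (SI I : TwoFold B ι) := by
  rw [map_mono]
  have e : ∀ j, P eS eS ((if ε j then w' (I j) else w (I j) : TwoFold B ι)) = w (I j) + w' (I j) := by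
    intro j; cases hj : ε j <;> simp [hj, P, eS, eL, eR, w, w', map_add]
  simp only [e]
  simp [SI]

lemma smul_list_prod (c : B) (l : List (TwoFold B ι)) :
    (l.map (c • ·)).prod = c ^ l.length • l.prod := by
  induction l with
  | nil => simp
  | cons a t ih =>
    simp only [List.map_cons, List.prod_cons, ih, List.length_cons, smul_mul_assoc,
      mul_smul_comm, smul_smul, pow_succ]

lemma D_mono {r : ℕ} (I : Fin r → ι) (ε : Fin r → Bool) :
    P eLL eRR (mono I ε) = ((2 : B) ^ r) • (mono I ε : TwoFold B ι) := by
  rw [map_mono]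
  have fac : (fun j => P eLL eRR (if ε j then w' (I j) else w (I j))) =
      ((fun t => (2 : B) • t) ∘ fun j => (if ε j then w' (I j) else w (I j) : TwoFold B ι)) := by
    funext j
    cases hj : ε j <;> simp [hj, P, eLL, eRR, eL, eR, w, w', map_add, two_smul]
  rw [fac, ← List.map_ofFn, smul_list_prod, List.length_ofFn, mono]

lemma ofFn_prod_eq_zero {n : ℕ} (f : Fin n → TwoFold B ι) (k : ℕ) (hk : k + 1 < n)
    (h : f ⟨k, by omega⟩ * f ⟨k + 1, hk⟩ = 0) : (List.ofFn f).prod = 0 := by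
  induction n generalizing k with
  | zero => omega
  | succ m ih =>
    rw [List.ofFn_succ, List.prod_cons]
    cases k with
    | zero =>
      have hm : 1 < m + 1 := hk
      obtain ⟨m', rfl⟩ : ∃ m', m = m' + 1 := ⟨m - 1, by omega⟩
      rw [List.ofFn_succ, List.prod_cons, ← mul_assoc]
      have h01 : f 0 * f 1 = 0 := by
        convert h using 3 <;> simp [Fin.ext_iff]
      have h1 : ((0 : Fin (m' + 1)).succ : Fin (m' + 2)) = 1 := rfl
      rw [h1, h01, zero_mul]
    | succ k' =>
      have hz : (List.ofFn fun i : Fin m => f i.succ).prod = 0 := by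
        refine ih (fun i => f i.succ) k' (by omega) ?_
        simp only [Fin.succ_mk]
        convert h using 3 <;> simp [Fin.ext_iff] <;> omega
      rw [hz, mul_zero]

lemma adj_aux {r : ℕ} {I : Fin r → ι} (hmono : Monotone I) (p q : Fin r)
    (hpq : I p = I q) (hlt : p < q) :
    ∃ k : ℕ, ∃ hk : k + 1 < r, I ⟨k, by omega⟩ = I ⟨k + 1, hk⟩ := by
  have hq := q.isLt
  have hl : p.1 < q.1 := hlt
  refine ⟨p.1, by omega, ?_⟩
  have h1 : I ⟨p.1, by omega⟩ ≤ I ⟨p.1 + 1, by omega⟩ := hmono (by rw [Fin.mk_le_mk]; omega)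
  have h2 : I ⟨p.1 + 1, by omega⟩ ≤ I q := hmono (by rw [Fin.le_def]; simp; omega)
  have hp : (⟨p.1, by omega⟩ : Fin r) = p := Fin.eta p p.isLt
  refine le_antisymm h1 ?_
  rw [hp, hpq]
  exact h2

lemma adjacent_eq {r : ℕ} {I : Fin r → ι} (hmono : Monotone I) (hns : ¬ StrictMono I) :
    ∃ k : ℕ, ∃ hk : k + 1 < r, I ⟨k, by omega⟩ = I ⟨k + 1, hk⟩ := by
  have hninj : ¬ Function.Injective I := fun hinj => hns (hmono.strictMono_of_injective hinj)
  rw [Function.not_injective_iff] at hninj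
  obtain ⟨p, q, hpq, hne⟩ := hninj
  rcases hne.lt_or_gt with hlt | hlt
  · exact adj_aux hmono p q hpq hlt
  · exact adj_aux hmono q p hpq.symm hlt

end Aux

set_option maxHeartbeats 2000000 in
/-- Proposition on `α, β, γ, δ`: suppose `χ` is a mixed element of
homogeneous length `r ≥ 3`, written as a finite sum `χ = Σ_I Σ_ε a_I^ε w^ε_I` over
nondecreasing index sequences `I` of length `r` and mixed binary tuples `ε` (the pure
tuples have vanishing coefficient).  If `α(χ) + β(χ) = γ(χ) + δ(χ)`, then
`χ = Σ_I b_I (S_I − w_I − w'_I)`, a sum over strictly increasing sequences `I`. -/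
theorem stmt7 (r : ℕ) (hr : 3 ≤ r) (S : Finset (Fin r → ι)) (hS : ∀ I ∈ S, Monotone I)
    (a : (Fin r → ι) → (Fin r → Bool) → B)
    (hmixed : ∀ I ε, ((∀ j, ε j = false) ∨ (∀ j, ε j = true)) → a I ε = 0)
    (h : mapα (∑ I ∈ S, ∑ ε : Fin r → Bool, a I ε • mono I ε : TwoFold B ι) +
        mapβ (∑ I ∈ S, ∑ ε : Fin r → Bool, a I ε • mono I ε) =
      mapγ (∑ I ∈ S, ∑ ε : Fin r → Bool, a I ε • mono I ε) +
        mapδ (∑ I ∈ S, ∑ ε : Fin r → Bool, a I ε • mono I ε)) :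
    ∃ (T : Finset (Fin r → ι)) (b : (Fin r → ι) → B), (∀ I ∈ T, StrictMono I) ∧
      (∑ I ∈ S, ∑ ε : Fin r → Bool, a I ε • mono I ε : TwoFold B ι) =
        ∑ I ∈ T, b I • (SI I - mono I (fun _ => false) - mono I (fun _ => true)) := by
  classical
  set χ : TwoFold B ι := ∑ I ∈ S, ∑ ε : Fin r → Bool, a I ε • mono I ε with hχdef
  have hid : ∀ t : TwoFold B ι, P eL eR t = t := fun t => by rw [P_eL_eR]; rfl
  have e1 : P eL eL χ + P eLL eR χ = P eL eS χ + χ := by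
    have h' := rel h eL eL eR eLL eS (fun i => rfl) (fun i => rfl)
    rwa [hid] at h'
  have e2 : χ + P eS eR χ = P eL eRR χ + P eR eR χ := by
    have h' := rel h eL eR eR eS eRR (fun i => rfl) (fun i => rfl)
    rwa [hid] at h'
  have e3 : χ + P eS eL χ = P eL eS χ + P eR eL χ := by
    have h' := rel h eL eR eL eS eS (fun i => rfl) (fun i => add_comm (eR i) (eL i))
    rwa [hid] at h'
  have e4 : P eR eL χ + P eS eL χ = P eR eLL χ + P eL eL χ :=
    rel h eR eL eL eS eLL (fun i => add_comm (eR i) (eL i)) (fun i => rfl)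
  have e5 : P eR eR χ + P eRR eL χ = P eR eS χ + P eR eL χ :=
    rel h eR eR eL eRR eS (fun i => rfl) (fun i => add_comm (eR i) (eL i))
  have e6 : P eR eL χ + P eS eR χ = P eR eS χ + χ := by
    have h' := rel h eR eL eR eS eS (fun i => add_comm (eR i) (eL i)) (fun i => rfl)
    rwa [hid] at h'
  have e7 : χ + P eS eS χ = P eL eK χ + P eR eS χ := by
    have h' := rel h eL eR eS eS eK (fun i => rfl)
      (fun i => by simp only [eS, eK]; abel)
    rwa [hid] at h'
  have k1 : ∀ t : TwoFold B ι, P eL eRR (P eR eL t) = P eRR eL t := fun t => by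
    simpa using DFunLike.congr_fun comp_T2_S t
  have k2 : ∀ t : TwoFold B ι, P eLL eR (P eR eL t) = P eR eLL t := fun t => by
    simpa using DFunLike.congr_fun comp_T2'_S t
  have k3 : ∀ t : TwoFold B ι, P eL eRR (P eL eS t) = P eL eK t := fun t => by
    simpa using DFunLike.congr_fun comp_T2_Γ t
  have k4 : ∀ t : TwoFold B ι, P eL eRR (P eLL eR t) = P eLL eRR t := fun t => by
    simpa using DFunLike.congr_fun comp_T2_T2' t
  have k5 : ∀ t : TwoFold B ι, P eL eRR (P eL eL t) = P eL eL t := fun t => by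
    simpa using DFunLike.congr_fun comp_T2_A t
  have k6 : ∀ t : TwoFold B ι, P eLL eRR (P eR eL t) = P eR eL (P eLL eRR t) := fun t => by
    simpa using DFunLike.congr_fun comp_D_S t
  have hD : P eLL eRR χ = ((2 : B) ^ r) • χ := by
    rw [hχdef, map_sum, Finset.smul_sum]
    refine Finset.sum_congr rfl fun I _ => ?_
    rw [map_sum, Finset.smul_sum]
    refine Finset.sum_congr rfl fun ε _ => ?_
    rw [map_smul, D_mono, smul_comm]
  have h8 : (8 : ℚ) ≤ 2 ^ r := by
    calc (8 : ℚ) = 2 ^ 3 := by norm_num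
    _ ≤ 2 ^ r := by gcongr <;> norm_num
  have hstep1 : P eLL eR χ - P eLL eR (P eR eL χ) = (χ - P eR eL χ) + (χ - P eR eL χ) := by
    rw [k2]
    linear_combination (norm := abel) e1 - e3 + e4
  have hstep2 : P eL eRR χ - P eL eRR (P eR eL χ) = (χ - P eR eL χ) + (χ - P eR eL χ) := by
    rw [k1]
    linear_combination (norm := abel) e6 - e5 - e2
  have hσ : P eR eL χ = χ := by
    have hT2y : P eL eRR (χ - P eR eL χ) = (χ - P eR eL χ) + (χ - P eR eL χ) := by
      rw [map_sub]; exact hstep2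
    have hT2'y : P eLL eR (χ - P eR eL χ) = (χ - P eR eL χ) + (χ - P eR eL χ) := by
      rw [map_sub]; exact hstep1
    have hDy : P eLL eRR (χ - P eR eL χ) = ((2 : B) ^ r) • (χ - P eR eL χ) := by
      rw [map_sub, hD, k6, hD, map_smul, smul_sub]
    have hcalc : ((2 : B) ^ r) • (χ - P eR eL χ) = (4 : B) • (χ - P eR eL χ) := by
      calc ((2 : B) ^ r) • (χ - P eR eL χ) = P eLL eRR (χ - P eR eL χ) := hDy.symm
      _ = P eL eRR (P eLL eR (χ - P eR eL χ)) := (k4 _).symm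
      _ = ((χ - P eR eL χ) + (χ - P eR eL χ)) + ((χ - P eR eL χ) + (χ - P eR eL χ)) := by
          rw [hT2'y, map_add, hT2y]
      _ = (4 : B) • (χ - P eR eL χ) := by module
    have hne : ((2 : ℚ) ^ r - 4) ≠ 0 := by intro hz; rw [sub_eq_zero] at hz; linarith
    have hsub : (((2 : B) ^ r - 4)) • (χ - P eR eL χ) = 0 := by
      rw [sub_smul, hcalc, sub_self]
    have halg : ((2 : B) ^ r - (4 : B)) = algebraMap ℚ B ((2 : ℚ) ^ r - 4) := by
      rw [map_sub, map_pow, show (algebraMap ℚ B) (2:ℚ) = 2 from map_ofNat _ 2,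
        show (algebraMap ℚ B) (4:ℚ) = 4 from map_ofNat _ 4]
    have hy : χ - P eR eL χ = 0 := by
      have h1 : (algebraMap ℚ B (((2 : ℚ) ^ r - 4)⁻¹)) • ((((2 : B) ^ r - 4)) • (χ - P eR eL χ)) = 0 := by
        rw [hsub, smul_zero]
      rwa [halg, smul_smul, ← map_mul, inv_mul_cancel₀ hne, map_one, one_smul] at h1
    have := sub_eq_zero.mp hy
    exact this.symm
  have hK2 : P eL eK χ = P eL eL χ + ((2 : B) ^ r) • χ - P eL eRR χ := by
    rw [← k3 χ]
    have hg : P eL eS χ = P eL eL χ + P eLL eR χ - χ := by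
      linear_combination (norm := abel) -e1
    rw [hg, map_sub, map_add, k5, k4, hD]
  have hL : P eR eS χ = P eL eRR χ + P eR eR χ - χ := by
    linear_combination (norm := abel) e2 - e6 + hσ
  have main : ((2 : B) ^ r - 2) • χ = P eS eS χ - P eL eL χ - P eR eR χ := by
    have e7' := e7
    rw [hK2, hL] at e7'
    linear_combination (norm := module) -e7'
  have hC : P eS eS χ = ∑ I ∈ S, ∑ ε : Fin r → Bool, a I ε • SI I := by
    rw [hχdef, map_sum]
    refine Finset.sum_congr rfl fun I _ => ?_
    rw [map_sum]
    refine Finset.sum_congr rfl fun ε _ => ?_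
    rw [map_smul, C_mono]
  have hA : P eL eL χ = ∑ I ∈ S, ∑ ε : Fin r → Bool, a I ε • mono I (fun _ => false) := by
    rw [hχdef, map_sum]
    refine Finset.sum_congr rfl fun I _ => ?_
    rw [map_sum]
    refine Finset.sum_congr rfl fun ε _ => ?_
    rw [map_smul, A_mono]
  have hB : P eR eR χ = ∑ I ∈ S, ∑ ε : Fin r → Bool, a I ε • mono I (fun _ => true) := by
    rw [hχdef, map_sum]
    refine Finset.sum_congr rfl fun I _ => ?_
    rw [map_sum]
    refine Finset.sum_congr rfl fun ε _ => ?_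
    rw [map_smul, B_mono]
  have main2 : ((2 : B) ^ r - 2) • χ = ∑ I ∈ S, ∑ ε : Fin r → Bool,
      a I ε • (SI I - mono I (fun _ => false) - mono I (fun _ => true)) := by
    rw [main, hC, hA, hB, ← Finset.sum_sub_distrib, ← Finset.sum_sub_distrib]
    refine Finset.sum_congr rfl fun I _ => ?_
    rw [← Finset.sum_sub_distrib, ← Finset.sum_sub_distrib]
    refine Finset.sum_congr rfl fun ε _ => ?_
    rw [smul_sub, smul_sub]
  have hne2 : ((2 : ℚ) ^ r - 2) ≠ 0 := by intro hz; rw [sub_eq_zero] at hz; linarith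
  set ρ : B := algebraMap ℚ B (((2 : ℚ) ^ r - 2)⁻¹) with hρ
  have hρmul : ρ * ((2 : B) ^ r - 2) = 1 := by
    have halg2 : ((2 : B) ^ r - (2 : B)) = algebraMap ℚ B ((2 : ℚ) ^ r - 2) := by
      rw [map_sub, map_pow, show (algebraMap ℚ B) (2:ℚ) = 2 from map_ofNat _ 2]
    rw [hρ, halg2, ← map_mul, inv_mul_cancel₀ hne2, map_one]
  have hχeq : χ = ∑ I ∈ S, (ρ * ∑ ε : Fin r → Bool, a I ε) •
      (SI I - mono I (fun _ => false) - mono I (fun _ => true)) := by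
    calc χ = (ρ * ((2 : B) ^ r - 2)) • χ := by rw [hρmul, one_smul]
    _ = ρ • (((2 : B) ^ r - 2) • χ) := by rw [mul_smul]
    _ = ρ • ∑ I ∈ S, ∑ ε : Fin r → Bool,
        a I ε • (SI I - mono I (fun _ => false) - mono I (fun _ => true)) := by rw [main2]
    _ = ∑ I ∈ S, (ρ * ∑ ε : Fin r → Bool, a I ε) •
        (SI I - mono I (fun _ => false) - mono I (fun _ => true)) := by
      rw [Finset.smul_sum]
      refine Finset.sum_congr rfl fun I _ => ?_
      rw [Finset.smul_sum]
      simp only [smul_smul]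
      rw [← Finset.sum_smul, ← Finset.mul_sum]
  refine ⟨S.filter (fun I => StrictMono I), fun I => ρ * ∑ ε : Fin r → Bool, a I ε, ?_, ?_⟩
  · intro I hI
    exact (Finset.mem_filter.mp hI).2
  · rw [hχeq]
    refine (Finset.sum_filter_of_ne fun I hI hne0 => ?_).symm
    by_contra hns
    apply hne0
    obtain ⟨k, hk, hadj⟩ := adjacent_eq (hS I hI) hns
    have hSI : (SI I : TwoFold B ι) = 0 := by
      rw [SI]
      refine ofFn_prod_eq_zero _ k hk ?_
      rw [hadj]
      have hι : w (I ⟨k + 1, hk⟩) + w' (I ⟨k + 1, hk⟩) =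
          ExteriorAlgebra.ι B (eL (I ⟨k + 1, hk⟩) + eR (I ⟨k + 1, hk⟩)) := by
        rw [map_add]; rfl
      rw [hι]
      exact ExteriorAlgebra.ι_sq_zero _
    have hff : (mono I (fun _ => false) : TwoFold B ι) = 0 := by
      rw [mono]
      refine ofFn_prod_eq_zero _ k hk ?_
      simp only [Bool.false_eq_true, if_false]
      rw [hadj]
      exact ExteriorAlgebra.ι_sq_zero _
    have htt : (mono I (fun _ => true) : TwoFold B ι) = 0 := by
      rw [mono]
      refine ofFn_prod_eq_zero _ k hk ?_
      simp only [if_true]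
      rw [hadj]
      exact ExteriorAlgebra.ι_sq_zero _
    rw [hSI, hff, htt]
    simp
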